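/- arXiv:1506.05866 — 4 statements merged into one kernel-verified Lean document; each statement's English description precedes it below -/
import Mathlib

section
/- Let φ(x) = Σᵢ φᵢ(xᵢ) where each φᵢ: ℝ → ℝ, each constraint set Xᵢ ⊆ ℝ contains 0, and r is a positive integer. Let x̃ᵢ* minimize φᵢ over Xᵢ, set vᵢ* = φᵢ(0) - φᵢ(x̃ᵢ*), and let I* be an index set of the r largest values among {vᵢ*}. Then the vector x* with xᵢ* = x̃ᵢ* for i ∈ I* and xᵢ* = 0 otherwise is a global minimizer of φ(x) subject to ‖x‖₀ ≤ r and x ∈ X₁ × ⋯ × Xₙ. -/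
/-!
Call `φ i 0 - φ i (x i)` the gain of coordinate `i`. A coordinate outside the support of `x`
gains nothing and one inside gains at most `v i`, so a feasible `x` gains at most the sum of
`v` over its support, a set of at most `r` indices. Since every `v i ≥ 0` and `I` collects
`r` largest values, that sum is at most `∑ i ∈ I, v i`, which is exactly the gain of `xs`.
-/

open Finset

namespace Finset

variable {ι M : Type*} [AddCommMonoid M] [LinearOrder M] [IsOrderedAddMonoid M]

theorem sum_le_sum_of_card_le_of_forall_le {s t : Finset ι} {f : ι → M}
    (hcard : #s ≤ #t) (hle : ∀ i ∈ t, ∀ j ∈ s, f j ≤ f i) (hnonneg : ∀ i ∈ t, 0 ≤ f i) :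
    ∑ j ∈ s, f j ≤ ∑ i ∈ t, f i := by
  rcases t.eq_empty_or_nonempty with rfl | ht
  · simp [card_eq_zero.mp (Nat.le_zero.mp hcard)]
  obtain ⟨m, hm, hm_min⟩ := t.exists_min_image f ht
  calc ∑ j ∈ s, f j ≤ #s • f m := sum_le_card_nsmul s f (f m) (hle m hm)
    _ ≤ #t • f m := nsmul_le_nsmul_left (hnonneg m hm) hcard
    _ ≤ ∑ i ∈ t, f i := card_nsmul_le_sum t f (f m) hm_min

theorem sum_le_sum_of_card_le_of_forall_notMem_le [DecidableEq ι] {s t : Finset ι} {f : ι → M}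
    (hcard : #s ≤ #t) (htop : ∀ i ∈ t, ∀ j ∉ t, f j ≤ f i) (hnonneg : ∀ i ∈ t, 0 ≤ f i) :
    ∑ j ∈ s, f j ≤ ∑ i ∈ t, f i := by
  have hsdiff : ∑ j ∈ s \ t, f j ≤ ∑ i ∈ t \ s, f i :=
    sum_le_sum_of_card_le_of_forall_le (card_sdiff_le_card_sdiff_iff.mpr hcard)
      (fun i hi j hj => htop i (mem_sdiff.mp hi).1 j (mem_sdiff.mp hj).2)
      (fun i hi => hnonneg i (mem_sdiff.mp hi).1)
  rw [← sum_inter_add_sum_sdiff s t, ← sum_inter_add_sum_sdiff t s, inter_comm]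
  gcongr

end Finset

section SeparableMinimization

variable {ι : Type*} [Fintype ι] (φ : ι → ℝ → ℝ)

theorem sum_gain_le_sum_gain_on_support {X : ι → Set ℝ} {xt : ι → ℝ}
    (hmin : ∀ i, ∀ t ∈ X i, φ i (xt i) ≤ φ i t)
    {x : ι → ℝ} (hx : ∀ i, x i ∈ X i) :
    ∑ i, (φ i 0 - φ i (x i)) ≤ ∑ i ∈ univ.filter (x · ≠ 0), (φ i 0 - φ i (xt i)) := by
  rw [sum_filter]
  refine sum_le_sum fun i _ => ?_
  split_ifs with hxi
  · linarith [hmin i (x i) (hx i)]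
  · simp [not_not.mp hxi]

theorem sum_gain_piecewise_zero [DecidableEq ι] (xt : ι → ℝ) (I : Finset ι) :
    ∑ i, (φ i 0 - φ i (if i ∈ I then xt i else 0)) = ∑ i ∈ I, (φ i 0 - φ i (xt i)) := by
  rw [← Fintype.sum_ite_mem I]
  refine sum_congr rfl fun i _ => ?_
  split_ifs <;> simp

end SeparableMinimization

theorem stmt_3_general {n : ℕ} (φ : Fin n → ℝ → ℝ) (X : Fin n → Set ℝ) (r : ℕ)
    (hX0 : ∀ i, (0 : ℝ) ∈ X i)
    (xt : Fin n → ℝ) (hxt : ∀ i, xt i ∈ X i)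
    (hmin : ∀ i, ∀ t ∈ X i, φ i (xt i) ≤ φ i t)
    (v : Fin n → ℝ) (hv : ∀ i, v i = φ i 0 - φ i (xt i))
    (I : Finset (Fin n)) (hI : I.card = r)
    (htop : ∀ i ∈ I, ∀ j ∉ I, v j ≤ v i)
    (xs : Fin n → ℝ) (hxs : xs = fun i => if i ∈ I then xt i else 0) :
    ({i | xs i ≠ 0}.ncard ≤ r ∧ ∀ i, xs i ∈ X i) ∧
      ∀ x : Fin n → ℝ, {i | x i ≠ 0}.ncard ≤ r → (∀ i, x i ∈ X i) →
        ∑ i, φ i (xs i) ≤ ∑ i, φ i (x i) := by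
  subst hxs
  have hv_nonneg (i : Fin n) : 0 ≤ v i := by linarith [hv i, hmin i 0 (hX0 i)]
  refine ⟨⟨?_, fun i => ?_⟩, fun x hcard hx => ?_⟩
  · have hsupp : {i | (if i ∈ I then xt i else 0) ≠ 0} ⊆ (I : Set (Fin n)) := fun i hi => by
      by_contra hiI
      simp_all
    simpa [hI] using Set.ncard_le_ncard hsupp
  · dsimp only
    split_ifs
    exacts [hxt i, hX0 i]
  · have hcard' : #(univ.filter (x · ≠ 0)) ≤ #I := by
      rwa [hI, ← Set.ncard_coe_finset, coe_filter_univ]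
    have hgain : ∑ i, (φ i 0 - φ i (x i)) ≤ ∑ i, (φ i 0 - φ i (if i ∈ I then xt i else 0)) :=
      calc ∑ i, (φ i 0 - φ i (x i))
          ≤ ∑ i ∈ univ.filter (x · ≠ 0), v i := by
            simpa only [hv] using sum_gain_le_sum_gain_on_support φ hmin hx
        _ ≤ ∑ i ∈ I, v i := sum_le_sum_of_card_le_of_forall_notMem_le hcard' htop fun i _ => hv_nonneg i
        _ = _ := by simp only [hv, sum_gain_piecewise_zero]
    simp only [sum_sub_distrib] at hgain
    linarith

/-- Separable `l₀`-constrained minimization: taking the coordinatewise minimizers on the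
index set `I` of the `r` largest gains `vᵢ = φᵢ(0) - φᵢ(x̃ᵢ*)` and zero elsewhere yields a
global minimizer of `x ↦ ∑ᵢ φᵢ(xᵢ)` subject to `‖x‖₀ ≤ r` and `xᵢ ∈ Xᵢ`. -/
theorem stmt_3 {n : ℕ} (φ : Fin n → ℝ → ℝ) (X : Fin n → Set ℝ) (r : ℕ) (hr : 0 < r)
    (hX0 : ∀ i, (0 : ℝ) ∈ X i)
    (xt : Fin n → ℝ) (hxt : ∀ i, xt i ∈ X i)
    (hmin : ∀ i, ∀ t ∈ X i, φ i (xt i) ≤ φ i t)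
    (v : Fin n → ℝ) (hv : ∀ i, v i = φ i 0 - φ i (xt i))
    (I : Finset (Fin n)) (hI : I.card = r)
    (htop : ∀ i ∈ I, ∀ j ∉ I, v j ≤ v i)
    (xs : Fin n → ℝ) (hxs : xs = fun i => if i ∈ I then xt i else 0) :
    ({i | xs i ≠ 0}.ncard ≤ r ∧ ∀ i, xs i ∈ X i) ∧
      ∀ x : Fin n → ℝ, {i | x i ≠ 0}.ncard ≤ r → (∀ i, x i ∈ X i) →
        ∑ i, φ i (xs i) ≤ ∑ i, φ i (x i) :=
  stmt_3_general φ X r hX0 xt hxt hmin v hv I hI htop xs hxs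
end

section
/- Given a ∈ ℝⁿ, u ∈ [1/r, 1], and λ* ∈ ℝ satisfying Σ_{i ∈ I*} Π_{[0,u]}(aᵢ + λ*) = 1, where I* is an index set of the r largest entries of a, the vector x* defined by xᵢ* = Π_{[0,u]}(aᵢ + λ*) for i ∈ I* and xᵢ* = 0 otherwise is a global minimizer of ‖x - a‖² over the set F_r = {x ∈ ℝⁿ : Σᵢ xᵢ = 1, ‖x‖₀ ≤ r, 0 ≤ xᵢ ≤ u for all i}. -/
/-- The projection onto `[0, u]`. -/
noncomputable def proj01 (u t : ℝ) : ℝ := min (max t 0) u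

/-- The feasible region of the cardinality-constrained index-tracking problem. -/
def Fr (n r : ℕ) (u : ℝ) : Set (Fin n → ℝ) :=
  {x | ∑ i, x i = 1 ∧ {i | x i ≠ 0}.ncard ≤ r ∧ ∀ i, 0 ≤ x i ∧ x i ≤ u}

/-!
On a fixed support `I` the problem is the projection of `a` onto `{x ≥ 0, x ≤ u, ∑ x = 1}`,
whose optimality condition is the variational inequality of the clipping map `Π_{[0,u]}` with
multiplier `λ*`. A general feasible point is reduced to one supported in `I`: while some mass
`x_j` sits at `j ∉ I`, there is a free index `i ∈ I` (the support has at most `|I|` elements),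
and swapping the entries at `i` and `j` changes the cost by `2 x_j (a_j - a_i) ≤ 0`.
-/

open Finset

theorem proj01_mem_Icc {u : ℝ} (hu : 0 ≤ u) (t : ℝ) : proj01 u t ∈ Set.Icc 0 u :=
  ⟨le_min (le_max_right _ _) hu, min_le_right _ _⟩

theorem sub_proj01_mul_proj01_sub_nonneg {u s x : ℝ} (hx₀ : 0 ≤ x) (hxu : x ≤ u) :
    0 ≤ (x - proj01 u s) * (proj01 u s - s) := by
  unfold proj01
  rcases le_total s 0 with hs | hs
  · rw [max_eq_right hs, min_eq_left (hx₀.trans hxu)]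
    nlinarith
  · rw [max_eq_left hs]
    rcases le_total s u with hsu | hsu
    · rw [min_eq_left hsu]; nlinarith
    · rw [min_eq_right hsu]; nlinarith

variable {ι : Type*} [Fintype ι]

/-- `lam` is the Lagrange multiplier of the constraint `∑ x = ∑ y`. -/
theorem sum_sq_sub_le_of_forall_mul_le {a x y : ι → ℝ} (lam : ℝ)
    (hsum : ∑ i, x i = ∑ i, y i)
    (h : ∀ i, lam * (x i - y i) ≤ (x i - y i) * (y i - a i)) :
    ∑ i, (y i - a i) ^ 2 ≤ ∑ i, (x i - a i) ^ 2 :=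
  calc ∑ i, (y i - a i) ^ 2
      = ∑ i, ((y i - a i) ^ 2 + 2 * lam * (x i - y i)) := by
        rw [sum_add_distrib, ← mul_sum, sum_sub_distrib, hsum, sub_self, mul_zero, add_zero]
    _ ≤ ∑ i, (x i - a i) ^ 2 :=
        sum_le_sum fun i _ => by nlinarith [sq_nonneg (x i - y i), h i]

theorem sum_sq_sub_comp_swap_le [DecidableEq ι] {a x : ι → ℝ} {i j : ι}
    (hxi : x i = 0) (hxj : 0 ≤ x j) (ha : a j ≤ a i) :
    ∑ k, (x (Equiv.swap i j k) - a k) ^ 2 ≤ ∑ k, (x k - a k) ^ 2 := by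
  obtain rfl | hij := eq_or_ne i j
  · simp
  have hdiff : ∑ k, ((x k - a k) ^ 2 - (x (Equiv.swap i j k) - a k) ^ 2)
      = 2 * x j * (a i - a j) := by
    rw [Fintype.sum_eq_add i j hij fun k ⟨hki, hkj⟩ => by
      rw [Equiv.swap_apply_of_ne_of_ne hki hkj, sub_self]]
    simp only [Equiv.swap_apply_left, Equiv.swap_apply_right, hxi]
    ring
  have : 0 ≤ 2 * x j * (a i - a j) := by nlinarith
  rw [sum_sub_distrib] at hdiff
  linarith

theorem card_filter_comp_perm_ne_zero (x : ι → ℝ) (σ : Equiv.Perm ι) :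
    #{k | x (σ k) ≠ 0} = #{k | x k ≠ 0} :=
  card_equiv σ fun k => by simp

theorem exists_perm_support_subset_sum_sq_le [DecidableEq ι] {a : ι → ℝ} {I : Finset ι}
    (htop : ∀ i ∈ I, ∀ j ∉ I, a j ≤ a i) {x : ι → ℝ} (hx₀ : ∀ i, 0 ≤ x i)
    (hcard : #{i | x i ≠ 0} ≤ #I) :
    ∃ σ : Equiv.Perm ι, (∀ i ∉ I, x (σ i) = 0) ∧
      ∑ i, (x (σ i) - a i) ^ 2 ≤ ∑ i, (x i - a i) ^ 2 := by
  induction hN : #(({i | x i ≠ 0} : Finset ι) \ I) using Nat.strong_induction_on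
      generalizing x with
  | _ N ih =>
    subst hN
    by_cases hout : ({i | x i ≠ 0} : Finset ι) \ I = ∅
    · rw [sdiff_eq_empty_iff_subset] at hout
      exact ⟨1, fun i hi => by_contra fun hxi => hi (hout (by simpa using hxi)), le_rfl⟩
    obtain ⟨j, hj⟩ := nonempty_iff_ne_empty.mpr hout
    obtain ⟨hxj, hjI⟩ : x j ≠ 0 ∧ j ∉ I := by simpa using hj
    have hfree : (I \ ({i | x i ≠ 0} : Finset ι)).Nonempty := by
      rw [sdiff_nonempty]
      intro hsub
      exact hjI (eq_of_subset_of_card_le hsub hcard ▸ by simpa using hxj)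
    obtain ⟨i, hi⟩ := hfree
    obtain ⟨hiI, hxi⟩ : i ∈ I ∧ x i = 0 := by simpa using hi
    set τ := Equiv.swap i j
    have hlt :
        #(({k | x (τ k) ≠ 0} : Finset ι) \ I) < #(({k | x k ≠ 0} : Finset ι) \ I) := by
      refine (card_le_card fun k hk => ?_).trans_lt (card_erase_lt_of_mem hj)
      obtain ⟨hxk, hkI⟩ : x (τ k) ≠ 0 ∧ k ∉ I := by simpa using hk
      have hki : k ≠ i := fun h => hkI (h ▸ hiI)
      have hkj : k ≠ j := by rintro rfl; simp [τ, hxi] at hxk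
      rw [Equiv.swap_apply_of_ne_of_ne hki hkj] at hxk
      simp [hkj, hxk, hkI]
    obtain ⟨ρ, hρI, hρcost⟩ := ih _ hlt (fun k => hx₀ _)
      (card_filter_comp_perm_ne_zero x τ ▸ hcard) rfl
    exact ⟨τ * ρ, hρI,
      hρcost.trans (sum_sq_sub_comp_swap_le hxi (hx₀ j) (htop i hiI j hjI))⟩

theorem stmt_5_general {n r : ℕ} (a : Fin n → ℝ) (u lam : ℝ)
    (hu : 1 / (r : ℝ) ≤ u ∧ u ≤ 1)
    (I : Finset (Fin n)) (hI : I.card = r) (htop : ∀ i ∈ I, ∀ j ∉ I, a j ≤ a i)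
    (hlam : ∑ i ∈ I, proj01 u (a i + lam) = 1)
    (xs : Fin n → ℝ) (hxs : xs = fun i => if i ∈ I then proj01 u (a i + lam) else 0) :
    xs ∈ Fr n r u ∧ ∀ x ∈ Fr n r u, ∑ i, (xs i - a i) ^ 2 ≤ ∑ i, (x i - a i) ^ 2 := by
  have hu₀ : 0 ≤ u := le_trans (by positivity) hu.1
  have hncard (x : Fin n → ℝ) : {i | x i ≠ 0}.ncard = #{i | x i ≠ 0} := by
    rw [Set.ncard_eq_toFinset_card', Set.toFinset_ofPred]
  have hsum : ∑ i, xs i = 1 := by rw [hxs, sum_ite_mem, univ_inter, hlam]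
  subst hxs
  refine ⟨⟨hsum, ?_, fun i => ?_⟩, ?_⟩
  · rw [hncard, ← hI]
    exact card_le_card fun i hi => by by_contra h; simp [h] at hi
  · dsimp only
    split_ifs
    exacts [proj01_mem_Icc hu₀ _, ⟨le_rfl, hu₀⟩]
  rintro x ⟨hxsum, hxcard, hxbox⟩
  obtain ⟨σ, hσI, hσcost⟩ := exists_perm_support_subset_sum_sq_le htop (fun i => (hxbox i).1)
    (hI ▸ hncard x ▸ hxcard)
  refine le_trans ?_ hσcost
  refine sum_sq_sub_le_of_forall_mul_le lam (by rw [Equiv.sum_comp, hxsum, hsum]) fun i => ?_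
  by_cases hi : i ∈ I
  · simp only [if_pos hi]
    nlinarith [sub_proj01_mul_proj01_sub_nonneg (s := a i + lam) (hxbox (σ i)).1 (hxbox (σ i)).2]
  · simp [hi, hσI i hi]

/-- Closed-form solution of the projection subproblem `min_{x ∈ F_r} ‖x - a‖²`:
with `I*` an index set of the `r` largest entries of `a` and `λ*` satisfying
`∑_{i ∈ I*} Π_{[0,u]}(aᵢ + λ*) = 1`, the vector `x*` with entries
`Π_{[0,u]}(aᵢ + λ*)` on `I*` and `0` elsewhere is a global minimizer. -/
theorem stmt_5 {n r : ℕ} (hr : 0 < r) (hrn : r ≤ n) (a : Fin n → ℝ) (u lam : ℝ)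
    (hu : 1 / (r : ℝ) ≤ u ∧ u ≤ 1)
    (I : Finset (Fin n)) (hI : I.card = r) (htop : ∀ i ∈ I, ∀ j ∉ I, a j ≤ a i)
    (hlam : ∑ i ∈ I, proj01 u (a i + lam) = 1)
    (xs : Fin n → ℝ) (hxs : xs = fun i => if i ∈ I then proj01 u (a i + lam) else 0) :
    xs ∈ Fr n r u ∧ ∀ x ∈ Fr n r u, ∑ i, (xs i - a i) ^ 2 ≤ ∑ i, (x i - a i) ^ 2 :=
  stmt_5_general a u lam hu I hI htop hlam xs hxs
end

section
/- Let f: ℝⁿ → ℝ be convex and differentiable, and let x* ∈ F_r with ‖x*‖₀ = r and support J*. If x* is a stationary point of the restricted problem min f(x) subject to Σᵢ xᵢ = 1, 0 ≤ xⱼ ≤ u for j ∈ J*, xⱼ = 0 for j ∉ J* (i.e., -∇f(x*) is in the normal cone of this convex feasible set at x*), then x* is a local minimizer of f over F_r = {x : Σᵢ xᵢ = 1, ‖x‖₀ ≤ r, 0 ≤ xᵢ ≤ u}. -/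
open scoped RealInnerProductSpace

/-- The feasible region of the cardinality-constrained index-tracking problem. -/
def FrE (n r : ℕ) (u : ℝ) : Set (EuclideanSpace ℝ (Fin n)) :=
  {x | ∑ i, x i = 1 ∧ {i | x i ≠ 0}.ncard ≤ r ∧ ∀ i, 0 ≤ x i ∧ x i ≤ u}

/-!
Nonzero coordinates stay nonzero nearby, so a point of `F_r` close to `x*` has support
containing `J*`; as `|J*| = r` is the maximal support size in `F_r`, its support is exactly
`J*`, i.e. it lies in the restricted polytope `Ω̃`. On `Ω̃` the point `x*` is a global minimizer,
because for a convex function the first-order condition `f x* + ⟪∇f(x*), y - x*⟫ ≤ f y`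
turns stationarity into minimality.
-/

open Filter Topology

theorem ConvexOn.add_apply_sub_le_of_hasFDerivAt {E : Type*} [NormedAddCommGroup E]
    [NormedSpace ℝ E] {s : Set E} {f : E → ℝ} {f' : E →L[ℝ] ℝ} {x y : E}
    (hf : ConvexOn ℝ s f) (hx : x ∈ s) (hy : y ∈ s) (hf' : HasFDerivAt f f' x) :
    f x + f' (y - x) ≤ f y := by
  set φ : ℝ → ℝ := f ∘ AffineMap.lineMap x y
  have hφ : ConvexOn ℝ (Set.Icc 0 1) φ :=
    (hf.comp_affineMap _).subset (fun t ht => Convex.lineMap_mem hf.1 hx hy ht)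
      (convex_Icc 0 1)
  have hφ' : HasDerivAt φ (f' (y - x)) 0 := by
    rw [← AffineMap.lineMap_apply_zero (k := ℝ) x y] at hf'
    exact hf'.comp_hasDerivAt 0 AffineMap.hasDerivAt_lineMap
  have hslope := hφ.le_slope_of_hasDerivAt (by simp) (by simp) one_pos hφ'
  simp only [φ, slope_def_field, Function.comp_apply, AffineMap.lineMap_apply_one,
    AffineMap.lineMap_apply_zero, sub_zero, div_one] at hslope
  linarith

theorem ConvexOn.isMinOn_of_inner_gradient_nonneg {E : Type*} [NormedAddCommGroup E]
    [InnerProductSpace ℝ E] [CompleteSpace E] {s t : Set E} {f : E → ℝ} {g x : E}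
    (hf : ConvexOn ℝ s f) (hx : x ∈ s) (hts : t ⊆ s) (hg : HasGradientAt f g x)
    (hstat : ∀ y ∈ t, 0 ≤ ⟪g, y - x⟫) : IsMinOn f t x := fun y hy => by
  show f x ≤ f y
  have hfirst := hf.add_apply_sub_le_of_hasFDerivAt hx (hts hy) hg.hasFDerivAt
  rw [InnerProductSpace.toDual_apply_apply] at hfirst
  linarith [hstat y hy]

theorem EuclideanSpace.eventually_apply_ne_zero {ι 𝕜 : Type*} [Finite ι] [RCLike 𝕜]
    (x : EuclideanSpace 𝕜 ι) : ∀ᶠ y in 𝓝 x, ∀ j, x j ≠ 0 → y j ≠ 0 :=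
  eventually_all.2 fun j => by
    by_cases hj : x j = 0
    · simp [hj]
    · simpa [hj] using (PiLp.continuous_apply 2 _ j).continuousAt.eventually_ne hj

theorem support_eq_of_mem_FrE {n r : ℕ} {u : ℝ} {x xs : EuclideanSpace ℝ (Fin n)}
    (hx : x ∈ FrE n r u) (hsupp : {j | xs j ≠ 0}.ncard = r)
    (hsub : ∀ j, xs j ≠ 0 → x j ≠ 0) : {j | x j ≠ 0} = {j | xs j ≠ 0} :=
  (Set.eq_of_subset_of_ncard_le hsub (hsupp ▸ hx.2.1) (Set.toFinite _)).symm

theorem stmt_9_general {n r : ℕ} (u : ℝ)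
    (f : EuclideanSpace ℝ (Fin n) → ℝ) (hconv : ConvexOn ℝ Set.univ f)
    (g xs : EuclideanSpace ℝ (Fin n)) (hgrad : HasGradientAt f g xs)
    (hsupp : {j | xs j ≠ 0}.ncard = r)
    (Ωt : Set (EuclideanSpace ℝ (Fin n)))
    (hΩt : Ωt = {x | ∑ i, x i = 1 ∧
      ∀ j, (xs j ≠ 0 → 0 ≤ x j ∧ x j ≤ u) ∧ (xs j = 0 → x j = 0)})
    (hstat : ∀ y ∈ Ωt, ⟪-g, y - xs⟫ ≤ 0) :
    IsLocalMinOn f (FrE n r u) xs := by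
  have hmin : IsMinOn f Ωt xs :=
    hconv.isMinOn_of_inner_gradient_nonneg (Set.mem_univ xs) (Set.subset_univ Ωt) hgrad
      fun y hy => by simpa [inner_neg_left] using hstat y hy
  filter_upwards [nhdsWithin_le_nhds (EuclideanSpace.eventually_apply_ne_zero xs),
    self_mem_nhdsWithin] with x hsub hx
  refine hmin (hΩt ▸ ⟨hx.1, fun j => ⟨fun _ => hx.2.2 j, fun hj => ?_⟩⟩)
  by_contra hxj
  exact (Set.ext_iff.1 (support_eq_of_mem_FrE hx hsupp hsub) j).1 hxj hj

/-- If `f` is convex and differentiable and `x* ∈ F_r` with `‖x*‖₀ = r` is a stationary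
point of the restricted problem over `Ω̃` (the polytope fixing the support `J*` of `x*`),
i.e. `-∇f(x*)` lies in the normal cone of `Ω̃` at `x*`, then `x*` is a local minimizer of
`f` over `F_r`. -/
theorem stmt_9 {n r : ℕ} (hr : 0 < r) (u : ℝ) (hu : 1 / (r : ℝ) ≤ u ∧ u ≤ 1)
    (f : EuclideanSpace ℝ (Fin n) → ℝ) (hconv : ConvexOn ℝ Set.univ f)
    (g xs : EuclideanSpace ℝ (Fin n)) (hgrad : HasGradientAt f g xs)
    (hxs : xs ∈ FrE n r u) (hsupp : {j | xs j ≠ 0}.ncard = r)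
    (Ωt : Set (EuclideanSpace ℝ (Fin n)))
    (hΩt : Ωt = {x | ∑ i, x i = 1 ∧
      ∀ j, (xs j ≠ 0 → 0 ≤ x j ∧ x j ≤ u) ∧ (xs j = 0 → x j = 0)})
    (hstat : ∀ y ∈ Ωt, ⟪-g, y - xs⟫ ≤ 0) :
    IsLocalMinOn f (FrE n r u) xs :=
  stmt_9_general u f hconv g xs hgrad hsupp Ωt hΩt hstat
end

section
/- If a sequence {x^k} in a compact set satisfies f(x^{k+1}) ≤ max_{[k-M]₊ ≤ i ≤ k} f(x^i) - (c/2)‖x^{k+1} - x^k‖² for all k with c > 0 and f continuous, then ‖x^{k+1} - x^k‖ → 0 and {f(x^k)} converges. -/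
/-!
The window maxima `F k = max_{[k-M]₊ ≤ i ≤ k} f(x^i)` are nonincreasing and bounded below, so they
converge to some `L`. If `ℓ k` is an index in the window at which the maximum is attained, then
`f(x^{ℓ k}) → L`, and the descent inequality at `ℓ k - 1` forces `‖x^{ℓ k} - x^{ℓ k - 1}‖ → 0`;
uniform continuity of `f` then gives `f(x^{ℓ k - 1}) → L`. Repeating this `M` times shows
`f(x^{ℓ k - j}) → L` for every `j ≤ M`, and since every index `k` is of the form `ℓ m - j` with
`j ≤ M`, `f(x^k) → L`. The descent inequality at `k` then gives `‖x^{k+1} - x^k‖ → 0`.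
-/

open Filter Topology Uniformity Finset

def windowMax (a : ℕ → ℝ) (M k : ℕ) : ℝ :=
  (Icc (k - M) k).sup' ⟨k, by simp⟩ a

section WindowMax

variable {a : ℕ → ℝ} {M : ℕ}

lemma le_windowMax {i k : ℕ} (hi : i ∈ Icc (k - M) k) : a i ≤ windowMax a M k :=
  le_sup' a hi

lemma self_le_windowMax (k : ℕ) : a k ≤ windowMax a M k :=
  le_windowMax (by simp)

lemma exists_mem_window_eq_windowMax (k : ℕ) : ∃ i ∈ Icc (k - M) k, windowMax a M k = a i :=
  exists_mem_eq_sup' _ a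

lemma windowMax_succ_le {k : ℕ} (h : a (k + 1) ≤ windowMax a M k) :
    windowMax a M (k + 1) ≤ windowMax a M k := by
  refine sup'_le _ _ fun i hi => ?_
  obtain ⟨hlo, hhi⟩ := mem_Icc.1 hi
  rcases hhi.eq_or_lt with rfl | hlt
  · exact h
  · exact le_windowMax (mem_Icc.2 ⟨by omega, by omega⟩)

lemma tendsto_windowMax_ciInf (h : ∀ k, a (k + 1) ≤ windowMax a M k)
    (ha : BddBelow (Set.range a)) :
    Tendsto (windowMax a M) atTop (𝓝 (⨅ k, windowMax a M k)) := by
  obtain ⟨b, hb⟩ := ha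
  refine tendsto_atTop_ciInf (antitone_nat_of_succ_le fun k => windowMax_succ_le (h k)) ⟨b, ?_⟩
  rintro _ ⟨k, rfl⟩
  exact (hb ⟨k, rfl⟩).trans (self_le_windowMax k)

end WindowMax

/-- Every `k` equals `ℓ (k + M) - j` for some `j ≤ M`, so finitely many shifted limits suffice. -/
lemma tendsto_of_forall_tendsto_comp_sub {X : Type*} [TopologicalSpace X] {u : ℕ → X} {L : X}
    {ℓ : ℕ → ℕ} {M : ℕ} (hℓ : ∀ k, ℓ k ∈ Icc (k - M) k)
    (h : ∀ j ≤ M, Tendsto (fun k => u (ℓ k - j)) atTop (𝓝 L)) : Tendsto u atTop (𝓝 L) := by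
  intro U hU
  have hall : ∀ᶠ m in atTop, ∀ j ∈ range (M + 1), u (ℓ m - j) ∈ U :=
    (eventually_all_finset _).2 fun j hj => h j (by simpa [Nat.lt_succ_iff] using hj) hU
  obtain ⟨N, hN⟩ := eventually_atTop.1 hall
  refine eventually_atTop.2 ⟨N, fun k hk => ?_⟩
  have hmem := mem_Icc.1 (hℓ (k + M))
  have hj : ℓ (k + M) - (ℓ (k + M) - k) = k := by omega
  simpa [hj] using hN (k + M) (by omega) (ℓ (k + M) - k) (mem_range.2 (by omega))

lemma UniformContinuousOn.tendsto_dist_comp {α β ι : Type*} [PseudoMetricSpace α]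
    [PseudoMetricSpace β] {f : α → β} {s : Set α} (hf : UniformContinuousOn f s) {l : Filter ι}
    {p q : ι → α} (hp : ∀ i, p i ∈ s) (hq : ∀ i, q i ∈ s)
    (h : Tendsto (fun i => dist (p i) (q i)) l (𝓝 0)) :
    Tendsto (fun i => dist (f (p i)) (f (q i))) l (𝓝 0) := by
  have hpq : Tendsto (fun i => (p i, q i)) l (𝓤 α ⊓ 𝓟 (s ×ˢ s)) :=
    tendsto_inf.2 ⟨tendsto_uniformity_iff_dist_tendsto_zero.2 h,
      tendsto_principal.2 (Eventually.of_forall fun i => ⟨hp i, hq i⟩)⟩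
  exact tendsto_uniformity_iff_dist_tendsto_zero.1 (Tendsto.comp hf hpq)

lemma tendsto_zero_of_mul_sq_tendsto_zero {ι : Type*} {l : Filter ι} {d : ι → ℝ} {c : ℝ}
    (hc : 0 < c) (hd : ∀ i, 0 ≤ d i) (h : Tendsto (fun i => c * d i ^ 2) l (𝓝 0)) :
    Tendsto d l (𝓝 0) := by
  have hsqrt := (h.div_const c).sqrt
  simpa [hc.ne', Real.sqrt_sq (hd _)] using hsqrt

def NonmonotoneDescent {E : Type*} [PseudoMetricSpace E] (f : E → ℝ) (x : ℕ → E) (M : ℕ)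
    (c : ℝ) : Prop :=
  ∀ k, f (x (k + 1)) ≤ windowMax (fun i => f (x i)) M k - c * dist (x (k + 1)) (x k) ^ 2

namespace NonmonotoneDescent

variable {E : Type*} [PseudoMetricSpace E] {f : E → ℝ} {x : ℕ → E} {M : ℕ} {c : ℝ} {L : ℝ}
  {m : ℕ → ℕ}

lemma tendsto_windowMax (hdesc : NonmonotoneDescent f x M c) (hc : 0 ≤ c)
    (hbdd : BddBelow (Set.range fun k => f (x k))) :
    ∃ L, Tendsto (windowMax (fun i => f (x i)) M) atTop (𝓝 L) :=
  ⟨_, tendsto_windowMax_ciInf (fun k => (hdesc k).trans (sub_le_self _ (by positivity))) hbdd⟩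

lemma tendsto_dist_succ (hdesc : NonmonotoneDescent f x M c) (hc : 0 < c)
    (hF : Tendsto (windowMax (fun i => f (x i)) M) atTop (𝓝 L)) (hm : Tendsto m atTop atTop)
    (h : Tendsto (fun k => f (x (m k + 1))) atTop (𝓝 L)) :
    Tendsto (fun k => dist (x (m k + 1)) (x (m k))) atTop (𝓝 0) := by
  refine tendsto_zero_of_mul_sq_tendsto_zero hc (fun _ => dist_nonneg) ?_
  have hgap : Tendsto (fun k => windowMax (fun i => f (x i)) M (m k) - f (x (m k + 1))) atTop
      (𝓝 0) := by
    simpa using (hF.comp hm).sub h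
  exact squeeze_zero (fun k => by positivity) (fun k => by linarith [hdesc (m k)]) hgap

lemma tendsto_of_tendsto_succ (hdesc : NonmonotoneDescent f x M c) (hc : 0 < c) {K : Set E}
    (hf : UniformContinuousOn f K) (hx : ∀ k, x k ∈ K)
    (hF : Tendsto (windowMax (fun i => f (x i)) M) atTop (𝓝 L)) (hm : Tendsto m atTop atTop)
    (h : Tendsto (fun k => f (x (m k + 1))) atTop (𝓝 L)) :
    Tendsto (fun k => f (x (m k))) atTop (𝓝 L) :=
  h.congr_dist <| hf.tendsto_dist_comp (fun _ => hx _) (fun _ => hx _)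
    (hdesc.tendsto_dist_succ hc hF hm h)

theorem tendsto (hdesc : NonmonotoneDescent f x M c) (hc : 0 < c) {K : Set E}
    (hf : UniformContinuousOn f K) (hx : ∀ k, x k ∈ K)
    (hbdd : BddBelow (Set.range fun k => f (x k))) :
    Tendsto (fun k => dist (x (k + 1)) (x k)) atTop (𝓝 0) ∧
      ∃ L, Tendsto (fun k => f (x k)) atTop (𝓝 L) := by
  obtain ⟨L, hF⟩ := hdesc.tendsto_windowMax hc.le hbdd
  choose ℓ hℓ hℓeq using exists_mem_window_eq_windowMax (a := fun i => f (x i)) (M := M)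
  have hℓtop : Tendsto ℓ atTop atTop :=
    tendsto_atTop_mono (fun k => (mem_Icc.1 (hℓ k)).1) (tendsto_sub_atTop_nat M)
  have hshift : ∀ j, Tendsto (fun k => f (x (ℓ k - j))) atTop (𝓝 L) := by
    intro j
    induction j with
    | zero => exact hF.congr hℓeq
    | succ j ih =>
      refine hdesc.tendsto_of_tendsto_succ hc hf hx hF
        ((tendsto_sub_atTop_nat (j + 1)).comp hℓtop) (ih.congr' ?_)
      filter_upwards [hℓtop.eventually_ge_atTop (j + 1)] with k hk
      congr 2
      omega
  have hfx := tendsto_of_forall_tendsto_comp_sub (u := fun k => f (x k)) hℓ fun j _ => hshift j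
  exact ⟨hdesc.tendsto_dist_succ hc hF tendsto_id (hfx.comp (tendsto_add_atTop_nat 1)), L, hfx⟩

end NonmonotoneDescent

/-- If a sequence `{x^k}` in a compact set satisfies the nonmonotone descent condition
`f(x^{k+1}) ≤ max_{[k-M]₊ ≤ i ≤ k} f(x^i) - (c/2)‖x^{k+1} - x^k‖²` with `c > 0` and `f`
continuous, then `‖x^{k+1} - x^k‖ → 0` and `{f(x^k)}` converges. -/
theorem stmt_12 {n : ℕ} (f : EuclideanSpace ℝ (Fin n) → ℝ) (hf : Continuous f)
    (K : Set (EuclideanSpace ℝ (Fin n))) (hK : IsCompact K)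
    (x : ℕ → EuclideanSpace ℝ (Fin n)) (hx : ∀ k, x k ∈ K)
    (M : ℕ) (c : ℝ) (hc : 0 < c)
    (hdesc : ∀ k, f (x (k + 1)) ≤
      (Finset.Icc (k - M) k).sup' ⟨k, by simp⟩ (fun i => f (x i)) -
        c / 2 * ‖x (k + 1) - x k‖ ^ 2) :
    Filter.Tendsto (fun k => ‖x (k + 1) - x k‖) Filter.atTop (nhds 0) ∧
      ∃ l, Filter.Tendsto (fun k => f (x k)) Filter.atTop (nhds l) := by
  have hdesc' : NonmonotoneDescent f x M (c / 2) := fun k => by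
    rw [dist_eq_norm]
    exact hdesc k
  have hbdd : BddBelow (Set.range fun k => f (x k)) :=
    (hK.bddBelow_image hf.continuousOn).mono
      (Set.range_subset_iff.2 fun k => Set.mem_image_of_mem f (hx k))
  simpa only [dist_eq_norm] using
    hdesc'.tendsto (half_pos hc) (hK.uniformContinuousOn_of_continuous hf.continuousOn) hx hbdd
end
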